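/- If V = (v_0, …, v_d) is a chain, then the annihilators nest: T̃(v_{j+1}) equals the block matrix with T̃(v_j) in the top-left, −w_{j+1} in the top-right column, and Δ in the bottom-right corner, where w_{j+1} = T̃(v_j)[v_{j+1,j+1}, …, v_{j+1,1}]^T. -/

import Mathlib

open Polynomial

/-- The falling factorial polynomial `(x)_j = x(x-1)⋯(x-j+1)`. -/
noncomputable def fall (j : ℕ) : Polynomial ℝ :=
  ∏ k ∈ Finset.range j, (X - C (k : ℝ))

/-- The normalized falling factorial `[x]_j = (x)_j / j!`. -/
noncomputable def nfall (j : ℕ) : Polynomial ℝ :=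
  ((j.factorial : ℝ))⁻¹ • fall j

/-- The forward difference operator `Δp(x) = p(x+1) - p(x)`. -/
noncomputable def fdiff (p : Polynomial ℝ) : Polynomial ℝ :=
  p.comp (X + 1) - p

/-- Action of a generalized complete Taylor operator with constant coefficients `s`
on a vector of polynomials `v`, indexed by degree: the component of degree `j` is
`Δ(v j) + ∑_{k<j} s j k • v k`.  (In the matrix picture, the constants `s j k`, `k < j`,
are the strictly upper triangular entries of the operator written for the reversed
vector `[v_d, …, v_0]`; `s j (j-1) = -1` corresponds to the `-1` superdiagonal.) -/
noncomputable def tApply (s : ℕ → ℕ → ℝ) (v : ℕ → Polynomial ℝ) (j : ℕ) : Polynomial ℝ :=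
  fdiff (v j) + ∑ k ∈ Finset.range j, C (s j k) * v k

/-- `s` encodes a generalized complete Taylor operator of order `d`:
only the entries `s j k` with `k < j ≤ d` may be nonzero, and the entries
corresponding to the superdiagonal (in the reversed ordering) equal `-1`. -/
def IsTaylorOp (d : ℕ) (s : ℕ → ℕ → ℝ) : Prop :=
  (∀ j k, j ≤ k ∨ d < j → s j k = 0) ∧ ∀ j < d, s (j + 1) j = -1

/-- Membership in `V_d`: `v = (v_d, …, v_0)` with `v_j = [·]_j + u_j`, `deg u_j ≤ j - 1`
(so in particular `v_0 = 1`). -/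
def MemV (d : ℕ) (v : ℕ → Polynomial ℝ) : Prop :=
  ∀ j ≤ d, (v j - nfall j).degree < (j : WithBot ℕ)

/-- `s` annihilates the polynomial vector `v` up to order `d`: `T̃ v = 0`. -/
def Annihilates (d : ℕ) (s : ℕ → ℕ → ℝ) (v : ℕ → Polynomial ℝ) : Prop :=
  ∀ j ≤ d, tApply s v j = 0

/-- `V = (v_0, …, v_d)` (with `V j k` the degree-`k` component of `v_j`) is a chain of
length `d+1`: each `v_j ∈ V_j` and the compatibility condition holds, i.e. applying the
annihilator `T̃(v_j)` of `v_j` to the shifted vector `(v_{j+1,j+1}, …, v_{j+1,1})`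
yields a vector of constant polynomials. -/
def IsPolyChain (d : ℕ) (V : ℕ → ℕ → Polynomial ℝ) : Prop :=
  (∀ j ≤ d, MemV j (V j)) ∧
    ∀ j < d, ∀ s : ℕ → ℕ → ℝ, IsTaylorOp j s → Annihilates j s (V j) →
      ∀ i ≤ j, ∃ c : ℝ, tApply s (fun k => V (j + 1) (k + 1)) i = C c

/-! Since `v_{j+1,0} = 1`, the row of `T̃(v_{j+1})` of degree `a + 1` reads
`Δ v_{j+1,a+1} + ∑_{b<a} s'(a+1)(b+1) v_{j+1,b+1} + s'(a+1)0 = 0`, while the chain condition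
says that the row of `T̃(v_j)` of degree `a`, applied to the same shifted vector, is a constant.
Subtracting, a linear combination of the `v_{j+1,b+1}`, which have distinct positive degrees,
is constant; hence all its coefficients vanish, and so does the constant. -/

lemma degree_fall (j : ℕ) : (fall j).degree = j := by
  simp only [fall, degree_prod, degree_X_sub_C, Finset.sum_const, Finset.card_range, nsmul_one]

lemma degree_nfall (j : ℕ) : (nfall j).degree = j := by
  rw [nfall, smul_eq_C_mul, degree_C_mul (by positivity), degree_fall]

namespace MemV

variable {m : ℕ} {v : ℕ → Polynomial ℝ}

lemma degree_eq (hv : MemV m v) {k : ℕ} (hk : k ≤ m) : (v k).degree = k := by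
  have h := hv k hk
  rw [← degree_nfall k] at h
  simpa [degree_nfall] using degree_add_eq_right_of_degree_lt h

lemma apply_zero (hv : MemV m v) : v 0 = 1 := by
  have h := hv 0 m.zero_le
  rw [Nat.cast_zero, Nat.WithBot.lt_zero_iff, degree_eq_bot, sub_eq_zero] at h
  simp [h, nfall, fall]

end MemV

theorem Polynomial.eq_zero_of_sum_C_mul_eq_C {R ι : Type*} [Semiring R] [NoZeroDivisors R]
    {s : Finset ι} {p : ι → R[X]} {t : ι → R} {c : R}
    (hinj : Set.InjOn (fun i => (p i).degree) s) (hpos : ∀ i ∈ s, 0 < (p i).degree)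
    (h : ∑ i ∈ s, C (t i) * p i = C c) : (∀ i ∈ s, t i = 0) ∧ c = 0 := by
  have ht : ∀ i ∈ s, t i = 0 := by
    have hdeg := degree_sum_eq_of_disjoint (fun i => C (t i) * p i) s fun a ha b hb hab => by
      have hta : t a ≠ 0 := fun h0 => ha.2 (by simp [h0])
      have htb : t b ≠ 0 := fun h0 => hb.2 (by simp [h0])
      simpa [Function.onFun, degree_C_mul hta, degree_C_mul htb] using
        fun h => hab (hinj ha.1 hb.1 h)
    intro i hi
    by_contra hti
    have hle : (C (t i) * p i).degree ≤ (C c).degree := by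
      rw [← h, hdeg]
      exact Finset.le_sup (f := fun i => (C (t i) * p i).degree) hi
    rw [degree_C_mul hti] at hle
    exact (hpos i hi).not_ge (hle.trans degree_C_le)
  refine ⟨ht, ?_⟩
  rw [Finset.sum_eq_zero fun i hi => by rw [ht i hi, C_0, zero_mul]] at h
  exact C_eq_zero.mp h.symm

theorem tApply_succ (s : ℕ → ℕ → ℝ) (v : ℕ → Polynomial ℝ) (a : ℕ) :
    tApply s v (a + 1) =
      tApply (fun a b => s (a + 1) (b + 1)) (fun k => v (k + 1)) a + C (s (a + 1) 0) * v 0 := by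
  simp only [tApply, Finset.sum_range_succ']
  ring

theorem tApply_sub_tApply (s t : ℕ → ℕ → ℝ) (v : ℕ → Polynomial ℝ) (a : ℕ) :
    tApply s v a - tApply t v a = ∑ k ∈ Finset.range a, C (s a k - t a k) * v k := by
  simp only [tApply, C_sub, sub_mul, Finset.sum_sub_distrib]
  ring

theorem coeff_eq_of_tApply_eq_C {s t : ℕ → ℕ → ℝ} {v : ℕ → Polynomial ℝ} {a : ℕ} {c c' : ℝ}
    (hdeg : ∀ k < a, (v k).degree = (k + 1 : ℕ)) (hs : tApply s v a = C c)
    (ht : tApply t v a = C c') : (∀ k < a, s a k = t a k) ∧ c = c' := by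
  have hinj : Set.InjOn (fun k => (v k).degree) (Finset.range a) := fun x hx y hy hxy => by
    simp only [Finset.coe_range, Set.mem_Iio] at hx hy
    simp only [hdeg x hx, hdeg y hy, Nat.cast_inj] at hxy
    omega
  have hpos : ∀ k ∈ Finset.range a, 0 < (v k).degree := fun k hk => by
    rw [hdeg k (Finset.mem_range.mp hk)]
    exact_mod_cast k.succ_pos
  obtain ⟨hst, hcc⟩ := eq_zero_of_sum_C_mul_eq_C hinj hpos
    ((tApply_sub_tApply s t v a).symm.trans (by rw [hs, ht, C_sub]))
  exact ⟨fun k hk => sub_eq_zero.mp (hst k (Finset.mem_range.mpr hk)), sub_eq_zero.mp hcc⟩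

theorem IsPolyChain.annihilator_row {d j : ℕ} {V : ℕ → ℕ → Polynomial ℝ} {s s' : ℕ → ℕ → ℝ}
    (hV : IsPolyChain d V) (hj : j < d) (hs : IsTaylorOp j s) (hann : Annihilates j s (V j))
    (hann' : Annihilates (j + 1) s' (V (j + 1))) {a : ℕ} (ha : a ≤ j) :
    (∀ b < a, s a b = s' (a + 1) (b + 1)) ∧
      tApply s (fun k => V (j + 1) (k + 1)) a = C (-(s' (a + 1) 0)) := by
  have hv : MemV (j + 1) (V (j + 1)) := hV.1 (j + 1) hj
  obtain ⟨c, hc⟩ := hV.2 j hj s hs hann a ha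
  have hc' : tApply (fun a b => s' (a + 1) (b + 1)) (fun k => V (j + 1) (k + 1)) a =
      C (-(s' (a + 1) 0)) := by
    have h := hann' (a + 1) (by omega)
    rw [tApply_succ, hv.apply_zero] at h
    rw [C_neg]
    linear_combination h
  obtain ⟨hcoef, rfl⟩ := coeff_eq_of_tApply_eq_C (fun k hk => hv.degree_eq (by omega)) hc hc'
  exact ⟨hcoef, hc⟩

/-- Nesting of annihilators in a chain: if `s` is the annihilator of `v_j` and `s'` that of
`v_{j+1}`, then `T̃(v_{j+1})` is the block matrix with `T̃(v_j)` in the top-left (i.e.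
`s' (a+1) (b+1) = s a b`), the column `-w_{j+1}` in the top-right (i.e. the constants
`-(s' (i+1) 0)` are the entries of `w_{j+1} = T̃(v_j)(v_{j+1,j+1}, …, v_{j+1,1})ᵀ`),
and `Δ` in the bottom-right corner. -/
theorem chain_annihilator_nesting (d : ℕ) (V : ℕ → ℕ → Polynomial ℝ) (hV : IsPolyChain d V)
    (j : ℕ) (hj : j < d) (s s' : ℕ → ℕ → ℝ)
    (hs : IsTaylorOp j s) (hann : Annihilates j s (V j))
    (hs' : IsTaylorOp (j + 1) s') (hann' : Annihilates (j + 1) s' (V (j + 1))) :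
    (∀ a b : ℕ, s' (a + 1) (b + 1) = s a b) ∧
      ∀ i ≤ j, tApply s (fun k => V (j + 1) (k + 1)) i = C (-(s' (i + 1) 0)) := by
  have row := fun {a : ℕ} (ha : a ≤ j) => hV.annihilator_row hj hs hann hann' ha
  refine ⟨fun a b => ?_, fun i hi => (row hi).2⟩
  rcases le_or_gt a j with haj | haj
  · rcases lt_or_ge b a with hba | hba
    · exact ((row haj).1 b hba).symm
    · rw [hs.1 a b (Or.inl hba), hs'.1 (a + 1) (b + 1) (Or.inl (by omega))]
  · rw [hs.1 a b (Or.inr haj), hs'.1 (a + 1) (b + 1) (Or.inr (by omega))]
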